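/- Let F be a field, V a vector space over F, n ≥ 1, and D an n-determinant on V. Given an n×n matrix A = (a_{i,j}) over F and an n-tuple T = (v_1, …, v_n) of vectors in V, define A·T to be the n-tuple (w_1, …, w_n) with w_i = Σ_{j=1}^{n} a_{i,j}·v_j. Then D(A·T) = det(A)·D(T), where det(A) is the standard determinant of the matrix A. -/

import Mathlib

/-- The "main equation" for a function `D : V^n → F`:
for every `(n+1)`-tuple `v₁, …, vₙ, b`,
`D(v₁,…,vₙ) • b = ∑ₖ D(v₁,…,b,…,vₙ) • vₖ` (the `k`-th summand replaces `vₖ` by `b`). -/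
def MainEq (F : Type*) {V : Type*} [Field F] [AddCommGroup V] [Module F V]
    (n : ℕ) (D : (Fin n → V) → F) : Prop :=
  ∀ (v : Fin n → V) (b : V),
    D v • b = ∑ k : Fin n, D (Function.update v k b) • v k

/-- An `n`-determinant on `V`: a nonzero function `D : V^n → F` satisfying the main
equation, where moreover the dimension of `V` over `F` equals `n`. -/
def IsDeterminant (F V : Type*) [Field F] [AddCommGroup V] [Module F V]
    (n : ℕ) (D : (Fin n → V) → F) : Prop :=
  D ≠ 0 ∧ MainEq F n D ∧ Module.finrank F V = n

/-- `D : V^n → F` is multilinear: additive and homogeneous of degree 1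
in each variable separately. -/
def IsMultilinearFn (F : Type*) {V : Type*} [Field F] [AddCommGroup V] [Module F V]
    (n : ℕ) (D : (Fin n → V) → F) : Prop :=
  (∀ (v : Fin n → V) (k : Fin n) (u w : V),
      D (Function.update v k (u + w))
        = D (Function.update v k u) + D (Function.update v k w)) ∧
  (∀ (v : Fin n → V) (k : Fin n) (c : F) (u : V),
      D (Function.update v k (c • u)) = c * D (Function.update v k u))

/-- `D : V^n → F` is antisymmetric: interchanging any two arguments changes the sign. -/
def IsAntisymmetricFn (F : Type*) {V : Type*} [Field F] [AddCommGroup V] [Module F V]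
    (n : ℕ) (D : (Fin n → V) → F) : Prop :=
  ∀ (v : Fin n → V) (i j : Fin n), i ≠ j → D (v ∘ Equiv.swap i j) = - D v

/-!
If `D v ≠ 0`, the main equation at `v` writes every vector as a combination of the `v k`, so `v`
spans `V` and, since `dim V = n`, is a basis; hence `D` vanishes on dependent tuples. At a basis
`e` the main equation reads `D (e with e k replaced by b) = D e * (k-th coordinate of b)`, so `D`
is linear in each slot. Thus `D` is an alternating `n`-form, and every alternating form
transforms under `A` by `det A`.
-/

open Module Function

theorem AlternatingMap.map_sum_smul_eq_det_mul {R M ι : Type*} [CommRing R] [AddCommGroup M]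
    [Module R M] [Fintype ι] [DecidableEq ι] (f : M [⋀^ι]→ₗ[R] R) (A : Matrix ι ι R)
    (v : ι → M) : f (fun i => ∑ j, A i j • v j) = A.det * f v := by
  let g := f.compLinearMap (Fintype.linearCombination R v)
  have hA : g (Matrix.of.symm A) = f (fun i => ∑ j, A i j • v j) := rfl
  have hone : g (Pi.basisFun R ι) = f v := by
    simp [g, Fintype.linearCombination_apply, Pi.single_apply]
  rw [← hA, g.eq_smul_basis_det (Pi.basisFun R ι), AlternatingMap.smul_apply,
    Pi.basisFun_det_apply, hone, Equiv.apply_symm_apply, smul_eq_mul, mul_comm]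

namespace MainEq

variable {F V : Type*} [Field F] [AddCommGroup V] [Module F V] {n : ℕ} {D : (Fin n → V) → F}

theorem span_eq_top_of_ne_zero (hD : MainEq F n D) {v : Fin n → V} (hv : D v ≠ 0) :
    Submodule.span F (Set.range v) = ⊤ := by
  refine Submodule.eq_top_iff'.mpr fun b => ?_
  rw [← inv_smul_smul₀ hv b, hD v b]
  exact Submodule.smul_mem _ _ (Submodule.sum_mem _ fun k _ =>
    Submodule.smul_mem _ _ (Submodule.subset_span ⟨k, rfl⟩))

theorem linearIndependent_of_ne_zero (hD : MainEq F n D) (hV : finrank F V = n)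
    {v : Fin n → V} (hv : D v ≠ 0) : LinearIndependent F v :=
  linearIndependent_of_top_le_span_of_card_eq_finrank (hD.span_eq_top_of_ne_zero hv).ge
    (by simp [hV])

theorem apply_eq_zero_of_not_linearIndependent (hD : MainEq F n D) (hV : finrank F V = n)
    {v : Fin n → V} (hv : ¬LinearIndependent F v) : D v = 0 :=
  not_not.mp (mt (hD.linearIndependent_of_ne_zero hV) hv)

theorem apply_update_basis (hD : MainEq F n D) (e : Basis (Fin n) F V) (k : Fin n) (b : V) :
    D (update e k b) = D e * e.repr b k := by
  have h : ∑ i, (D (update e i b) - D e * e.repr b i) • e i = 0 := by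
    simp only [sub_smul, Finset.sum_sub_distrib, mul_smul]
    rw [← hD e b, ← Finset.smul_sum, e.sum_repr b, sub_self]
  exact sub_eq_zero.mp (Fintype.linearIndependent_iff.mp e.linearIndependent _ h k)

/-- If `D` vanishes on every tuple `update v k b`, the zero map will do; otherwise such a
tuple is a basis `e`, and `update v k b = update e k b`. -/
theorem exists_linearMap_apply_update (hD : MainEq F n D) (hV : finrank F V = n)
    (v : Fin n → V) (k : Fin n) : ∃ φ : V →ₗ[F] F, ∀ b, D (update v k b) = φ b := by
  by_cases h : ∃ b₀, D (update v k b₀) ≠ 0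
  · obtain ⟨b₀, hb₀⟩ := h
    let e := Basis.mk (hD.linearIndependent_of_ne_zero hV hb₀)
      (hD.span_eq_top_of_ne_zero hb₀).ge
    have he : ⇑e = update v k b₀ := Basis.coe_mk _ _
    refine ⟨D (update v k b₀) • e.coord k, fun b => ?_⟩
    simpa [he] using hD.apply_update_basis e k b
  · push Not at h
    exact ⟨0, h⟩

noncomputable def toAlternatingMap (hD : MainEq F n D) (hV : finrank F V = n) :
    V [⋀^Fin n]→ₗ[F] F where
  toMultilinearMap := MultilinearMap.mk' D
    (fun v k x y => by
      obtain ⟨φ, hφ⟩ := hD.exists_linearMap_apply_update hV v k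
      simp only [hφ, map_add])
    (fun v k c x => by
      obtain ⟨φ, hφ⟩ := hD.exists_linearMap_apply_update hV v k
      simp only [hφ, map_smul])
  map_eq_zero_of_eq' v _ _ hv hne :=
    hD.apply_eq_zero_of_not_linearIndependent hV fun h => hne (h.injective hv)

@[simp]
theorem coe_toAlternatingMap (hD : MainEq F n D) (hV : finrank F V = n) :
    ⇑(hD.toAlternatingMap hV) = D :=
  rfl

end MainEq

theorem stmt_16_general (F V : Type*) [Field F] [AddCommGroup V] [Module F V]
    (n : ℕ) (D : (Fin n → V) → F)
    (hD : IsDeterminant F V n D)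
    (A : Matrix (Fin n) (Fin n) F) (T : Fin n → V) :
    D (fun i => ∑ j : Fin n, A i j • T j) = A.det * D T := by
  obtain ⟨-, hMain, hrank⟩ := hD
  simpa using (hMain.toAlternatingMap hrank).map_sum_smul_eq_det_mul A T

theorem stmt_16 (F V : Type*) [Field F] [AddCommGroup V] [Module F V]
    (n : ℕ) (hn : 1 ≤ n) (D : (Fin n → V) → F)
    (hD : IsDeterminant F V n D)
    (A : Matrix (Fin n) (Fin n) F) (T : Fin n → V) :
    D (fun i => ∑ j : Fin n, A i j • T j) = A.det * D T :=
  stmt_16_general F V n D hD A T
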